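/- arXiv:2305.10564 — 4 statements merged into one kernel-verified Lean document; each statement's English description precedes it below -/
import Mathlib

section
/- Let (Ω, 𝓕, P) be a standard Borel probability space. Let X : Ω → 𝒳 and Y : Ω → 𝒴 be measurable maps into measurable spaces, and let ξ : Ω → Ξ be a measurable map that is independent of the pair (X, Y). Let S := g(X, Y) for a measurable g : 𝒳 × 𝒴 → ℝ and R := h(X, ξ) for a measurable h : 𝒳 × Ξ → {0,1}. Then S and R are conditionally independent given the σ-algebra mX generated by X. -/
/-!
Because `ξ` is independent of `(X, Y)` and `σ(X) ⊆ σ(X, Y)`, the tower property through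
`σ(X, Y)` gives, for `A ∈ σ(X, Y)`, `B ∈ σ(X)` and `V ∈ σ(ξ)`,
`P(A ∩ B ∩ V | X) = P(V) 1_B P(A | X) = P(A | X) P(B ∩ V | X)`.
The sets `B ∩ V` form a π-system generating `σ(X, ξ)`, so `(X, Y)` and `(X, ξ)` are
conditionally independent given `X`, and `S`, `R` are measurable functions of these pairs.
-/

open MeasureTheory ProbabilityTheory Set MeasurableSpace

theorem IsPiSystem.image2_inter {α : Type*} {C D : Set (Set α)} (hC : IsPiSystem C)
    (hD : IsPiSystem D) : IsPiSystem (image2 (· ∩ ·) C D) := by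
  rintro _ ⟨s₁, hs₁, t₁, ht₁, rfl⟩ _ ⟨s₂, hs₂, t₂, ht₂, rfl⟩ hst
  rw [inter_inter_inter_comm] at hst ⊢
  exact mem_image2_of_mem (hC _ hs₁ _ hs₂ (hst.mono inter_subset_left))
    (hD _ ht₁ _ ht₂ (hst.mono inter_subset_right))

theorem MeasurableSpace.sup_eq_generateFrom_image2_inter {Ω : Type*}
    (m₁ m₂ : MeasurableSpace Ω) :
    m₁ ⊔ m₂ = generateFrom
      (image2 (· ∩ ·) {s | MeasurableSet[m₁] s} {t | MeasurableSet[m₂] t}) := by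
  refine le_antisymm (sup_le (fun s hs ↦ ?_) (fun t ht ↦ ?_)) (generateFrom_le ?_)
  · exact measurableSet_generateFrom ⟨s, hs, univ, .univ, inter_univ s⟩
  · exact measurableSet_generateFrom ⟨univ, .univ, t, ht, univ_inter t⟩
  · rintro _ ⟨s, hs, t, ht, rfl⟩
    exact (le_sup_left (a := m₁) _ hs).inter (le_sup_right (b := m₂) _ ht)

section

variable {Ω : Type*} {m' m₁ m₂ mΩ : MeasurableSpace Ω} {μ : Measure Ω}

theorem condExp_indicator_ae_eq_measureReal_of_indep [IsFiniteMeasure μ] (h' : m' ≤ mΩ)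
    (h₂ : m₂ ≤ mΩ) (hindep : Indep m' m₂ μ) {t : Set Ω} (ht : MeasurableSet[m₂] t) :
    μ⟦t | m'⟧ =ᵐ[μ] fun _ ↦ μ.real t := by
  refine (condExp_indep_eq h₂ h' (stronglyMeasurable_const.indicator ht) hindep.symm).trans ?_
  simp only [integral_indicator_const _ (h₂ _ ht), smul_eq_mul, mul_one]
  rfl

theorem condExp_inter_ae_eq_smul_of_indep [IsFiniteMeasure μ] (h' : m' ≤ m₁)
    (h₁ : m₁ ≤ mΩ) (h₂ : m₂ ≤ mΩ) (hindep : Indep m₁ m₂ μ) {s t : Set Ω}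
    (hs : MeasurableSet[m₁] s) (ht : MeasurableSet[m₂] t) :
    μ⟦s ∩ t | m'⟧ =ᵐ[μ] μ.real t • μ⟦s | m'⟧ := by
  have h_inter : (s ∩ t).indicator (fun _ ↦ (1 : ℝ))
      = s.indicator (fun _ ↦ 1) * t.indicator (fun _ ↦ 1) := inter_indicator_one
  have ht_int : Integrable (t.indicator fun _ ↦ (1 : ℝ)) μ :=
    (integrable_const 1).indicator (h₂ _ ht)
  have hst_int : Integrable (s.indicator (fun _ ↦ (1 : ℝ)) * t.indicator (fun _ ↦ 1)) μ := by
    rw [← h_inter]; exact (integrable_const 1).indicator ((h₁ _ hs).inter (h₂ _ ht))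
  calc μ⟦s ∩ t | m'⟧
      =ᵐ[μ] μ[μ[s.indicator (fun _ ↦ 1) * t.indicator (fun _ ↦ 1) | m₁] | m'] := by
        rw [← h_inter]; exact (condExp_condExp_of_le h' h₁).symm
    _ =ᵐ[μ] μ[μ.real t • s.indicator (fun _ ↦ 1) | m'] := by
        refine condExp_congr_ae ?_
        filter_upwards [condExp_mul_of_stronglyMeasurable_left
          (stronglyMeasurable_const.indicator hs) hst_int ht_int,
          condExp_indicator_ae_eq_measureReal_of_indep h₁ h₂ hindep ht] with ω hω hω'
        simp only [hω, Pi.mul_apply, hω', Pi.smul_apply, smul_eq_mul, mul_comm]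
    _ =ᵐ[μ] μ.real t • μ⟦s | m'⟧ := condExp_smul _ _ _

theorem condExp_inter_ae_eq_indicator [IsFiniteMeasure μ] {a s : Set Ω}
    (ha : MeasurableSet[m'] a) (hs : MeasurableSet s) :
    μ⟦a ∩ s | m'⟧ =ᵐ[μ] a.indicator (μ⟦s | m'⟧) := by
  rw [← indicator_indicator]
  exact condExp_indicator ((integrable_const 1).indicator hs) ha

theorem condIndep_sup_of_indep [StandardBorelSpace Ω] [IsFiniteMeasure μ] (h' : m' ≤ m₁)
    (h₁ : m₁ ≤ mΩ) (h₂ : m₂ ≤ mΩ) (hindep : Indep m₁ m₂ μ) :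
    CondIndep m' m₁ (m' ⊔ m₂) (h'.trans h₁) μ := by
  have hm' := h'.trans h₁
  refine CondIndepSets.condIndep h₁ (sup_le hm' h₂) (@isPiSystem_measurableSet Ω m₁)
    ((@isPiSystem_measurableSet Ω m').image2_inter (@isPiSystem_measurableSet Ω m₂))
    (@generateFrom_measurableSet Ω m₁).symm (sup_eq_generateFrom_image2_inter m' m₂) ?_
  refine (condIndepSets_iff m' hm' _ _ (fun s hs ↦ h₁ s hs) ?_ μ).2 ?_
  · rintro _ ⟨a, ha, t, ht, rfl⟩
    exact (hm' a ha).inter (h₂ t ht)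
  rintro s _ hs ⟨a, ha, t, ht, rfl⟩
  have hs_meas := h₁ s hs
  have ht_meas := h₂ t ht
  rw [inter_left_comm]
  filter_upwards [condExp_inter_ae_eq_indicator ha (hs_meas.inter ht_meas),
    condExp_inter_ae_eq_indicator ha ht_meas,
    condExp_inter_ae_eq_smul_of_indep h' h₁ h₂ hindep hs ht,
    condExp_indicator_ae_eq_measureReal_of_indep hm' h₂ (indep_of_indep_of_le_left hindep h') ht]
    with ω h_ast h_at h_st h_t
  rw [Pi.mul_apply, h_ast, h_at]
  by_cases hω : ω ∈ a
  · rw [indicator_of_mem hω, indicator_of_mem hω, h_st, h_t, Pi.smul_apply, smul_eq_mul,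
      mul_comm]
  · rw [indicator_of_notMem hω, indicator_of_notMem hω, mul_zero]

end

theorem condIndepFun_prodMk_of_indepFun {Ω α β γ : Type*} {mΩ : MeasurableSpace Ω}
    [StandardBorelSpace Ω] [MeasurableSpace α] [MeasurableSpace β] [MeasurableSpace γ]
    {μ : Measure Ω} [IsFiniteMeasure μ] {X : Ω → α} {Y : Ω → β} {ξ : Ω → γ}
    (hX : Measurable X) (hY : Measurable Y) (hξ : Measurable ξ)
    (hindep : IndepFun ξ (fun ω ↦ (X ω, Y ω)) μ) :
    CondIndepFun (MeasurableSpace.comap X inferInstance) hX.comap_le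
      (fun ω ↦ (X ω, Y ω)) (fun ω ↦ (X ω, ξ ω)) μ := by
  rw [condIndepFun_iff_condIndep]
  rw [IndepFun_iff_Indep] at hindep
  erw [comap_prodMk X Y, comap_prodMk X ξ] at *
  exact condIndep_sup_of_indep le_sup_left (sup_le hX.comap_le hY.comap_le) hξ.comap_le
    hindep.symm

/-- **Proposition 2.2 (Independent evaluation data ensures MAR).**
If `S = g (X, Y)` is a measurable function of the test point `(X, Y)` and the abstention
decision `R = h (X, ξ)` is a measurable function of `X` and internal randomness `ξ`
independent of `(X, Y)`, then `S` and `R` are conditionally independent given `σ(X)`. -/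
theorem eval_indep_ensures_MAR
    {Ω 𝒳 𝒴 Ξ : Type*} [MeasurableSpace Ω] [StandardBorelSpace Ω]
    [MeasurableSpace 𝒳] [MeasurableSpace 𝒴] [MeasurableSpace Ξ]
    (P : Measure Ω) [IsProbabilityMeasure P]
    (X : Ω → 𝒳) (Y : Ω → 𝒴) (ξ : Ω → Ξ)
    (hX : Measurable X) (hY : Measurable Y) (hξ : Measurable ξ)
    (hindep : IndepFun ξ (fun ω => (X ω, Y ω)) P)
    (g : 𝒳 × 𝒴 → ℝ) (hg : Measurable g)
    (h : 𝒳 × Ξ → Bool) (hh : Measurable h) :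
    CondIndepFun (MeasurableSpace.comap X inferInstance) hX.comap_le
      (fun ω => g (X ω, Y ω)) (fun ω => h (X ω, ξ ω)) P :=
  (condIndepFun_prodMk_of_indepFun hX hY hξ hindep).comp hg hh
end

section
/- Assume the MAR condition and the ε-positivity condition. Then the counterfactual score is identified by the observed-data regression function: E[ μ0(X) ] = E[S] = ψ, where μ0(X) := E[(1−R)·S | mX] / (1 − π(X)) is computable from the distribution of the observed data (X, R, and S on {R = 0}) alone. -/
open MeasureTheory ProbabilityTheory

/-- **Proposition 2.4 (Identification of the counterfactual score).**
Under the MAR condition and ε-positivity, the counterfactual score `ψ = E[S]` is identified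
by the observed-data regression function `μ0(X) = E[(1−R)·S | σ(X)] / (1 − π(X))`,
where `π(X) = E[R | σ(X)]`: we have `E[μ0(X)] = E[S]`. -/
theorem counterfactual_score_identification
    {Ω 𝒳 : Type*} [MeasurableSpace Ω] [MeasurableSpace 𝒳]
    (P : Measure Ω) [IsProbabilityMeasure P]
    (X : Ω → 𝒳) (hX : Measurable X)
    (R : Ω → ℝ) (hR : Measurable R) (hR01 : ∀ ω, R ω = 0 ∨ R ω = 1)
    (S : Ω → ℝ) (hSmeas : Measurable S) (hSint : Integrable S P)
    -- the σ-algebra generated by X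
    (mX : MeasurableSpace Ω) (hmX : mX = MeasurableSpace.comap X inferInstance)
    -- MAR condition: E[(1−R)·S | mX] = E[1−R | mX] · E[S | mX] a.s.
    (hMAR : P[fun ω => (1 - R ω) * S ω|mX]
      =ᵐ[P] fun ω => (P[fun ω' => 1 - R ω'|mX]) ω * (P[S|mX]) ω)
    -- ε-positivity condition: π(X) = E[R | mX] ≤ 1 − ε a.s.
    (ε : ℝ) (hε : 0 < ε)
    (hpos : ∀ᵐ ω ∂P, (P[R|mX]) ω ≤ 1 - ε) :
    ∫ ω, (P[fun ω' => (1 - R ω') * S ω'|mX]) ω / (1 - (P[R|mX]) ω) ∂P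
      = ∫ ω, S ω ∂P := by
  have hm := hmX.le.trans hX.comap_le
  have hRint : Integrable R P := by
    refine Integrable.mono' (integrable_const 1) hR.aestronglyMeasurable ?_
    filter_upwards with ω
    rcases hR01 ω with h | h <;> simp [h]
  have h1 : P[fun ω' => 1 - R ω'|mX] =ᵐ[P] fun ω => 1 - (P[R|mX]) ω := by
    have := condExp_sub (m := mX) (μ := P) (integrable_const (1 : ℝ)) hRint
    refine this.trans ?_
    filter_upwards with ω
    simp [condExp_const (μ := P) hm (1 : ℝ)]
  have key : (fun ω => (P[fun ω' => (1 - R ω') * S ω'|mX]) ω / (1 - (P[R|mX]) ω))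
      =ᵐ[P] P[S|mX] := by
    filter_upwards [hMAR, h1, hpos] with ω hM h1ω hp
    rw [hM, h1ω]
    have hne : 1 - (P[R|mX]) ω ≠ 0 := by linarith
    field_simp
  rw [integral_congr_ae key, integral_condExp hm]
end

section
/- Assume the MAR condition and the ε-positivity condition. Then the inverse-probability-weighting identity holds: E[ (1−R)·S / (1 − π(X)) ] = E[S] = ψ. -/
/-!
Since `π` is `σ(X)`-measurable and `1 - π ≥ ε`, the weight `(1 - π)⁻¹` is bounded and can be
pulled out of the conditional expectation given `X`. By MAR, `E[(1 - R) S | X] = (1 - π) E[S | X]`,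
so the weight cancels and the tower property gives `E[(1 - R) S / (1 - π)] = E[E[S | X]] = E[S]`.
-/

open MeasureTheory ProbabilityTheory

section

variable {Ω : Type*} {m m₀ : MeasurableSpace Ω} {μ : Measure Ω}

theorem integral_div_eq_integral_of_condExp_eq_mul (hm : m ≤ m₀) [SigmaFinite (μ.trim hm)]
    {f g w : Ω → ℝ} {ε : ℝ} (hf : Integrable f μ) (hw : StronglyMeasurable[m] w) (hε : 0 < ε)
    (hwε : ∀ᵐ ω ∂μ, ε ≤ w ω) (hfg : μ[f|m] =ᵐ[μ] w * μ[g|m]) :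
    ∫ ω, f ω / w ω ∂μ = ∫ ω, g ω ∂μ := by
  have hw_inv : StronglyMeasurable[m] w⁻¹ := hw.measurable.inv.stronglyMeasurable
  have hw_inv_le : ∀ᵐ ω ∂μ, ‖w⁻¹ ω‖ ≤ ε⁻¹ := by
    filter_upwards [hwε] with ω hω
    rw [Pi.inv_apply, norm_inv, Real.norm_of_nonneg (hε.le.trans hω)]
    exact inv_anti₀ hε hω
  have hwf : Integrable (w⁻¹ * f) μ := hf.bdd_mul (hw_inv.mono hm).aestronglyMeasurable hw_inv_le
  calc ∫ ω, f ω / w ω ∂μ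
      = ∫ ω, μ[w⁻¹ * f|m] ω ∂μ := by
        rw [integral_condExp hm]
        simp only [Pi.mul_apply, Pi.inv_apply, div_eq_inv_mul]
    _ = ∫ ω, μ[g|m] ω ∂μ := by
        refine integral_congr_ae ?_
        filter_upwards [condExp_mul_of_stronglyMeasurable_left hw_inv hwf hf, hfg, hwε]
          with ω h_pull h_fg hω
        rw [h_pull, Pi.mul_apply, h_fg, Pi.mul_apply, Pi.inv_apply,
          inv_mul_cancel_left₀ (hε.trans_le hω).ne']
    _ = ∫ ω, g ω ∂μ := integral_condExp hm

theorem condExp_one_sub [IsFiniteMeasure μ] (hm : m ≤ m₀) {f : Ω → ℝ} (hf : Integrable f μ) :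
    μ[fun ω => 1 - f ω|m] =ᵐ[μ] fun ω => 1 - μ[f|m] ω := by
  have h := condExp_sub (integrable_const (1 : ℝ)) hf m
  rwa [condExp_const hm] at h

end

/-- **The inverse-probability-weighting (IPW) identity.**
Under the MAR condition and ε-positivity, `E[(1−R)·S / (1 − π(X))] = E[S] = ψ`,
where `π(X) = E[R | σ(X)]`. -/
theorem ipw_identity
    {Ω 𝒳 : Type*} [MeasurableSpace Ω] [MeasurableSpace 𝒳]
    (P : Measure Ω) [IsProbabilityMeasure P]
    (X : Ω → 𝒳) (hX : Measurable X)
    (R : Ω → ℝ) (hR : Measurable R) (hR01 : ∀ ω, R ω = 0 ∨ R ω = 1)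
    (S : Ω → ℝ) (hSmeas : Measurable S) (hSint : Integrable S P)
    -- the σ-algebra generated by X
    (mX : MeasurableSpace Ω) (hmX : mX = MeasurableSpace.comap X inferInstance)
    -- MAR condition: E[(1−R)·S | mX] = E[1−R | mX] · E[S | mX] a.s.
    (hMAR : P[fun ω => (1 - R ω) * S ω|mX]
      =ᵐ[P] fun ω => (P[fun ω' => 1 - R ω'|mX]) ω * (P[S|mX]) ω)
    -- ε-positivity condition: π(X) = E[R | mX] ≤ 1 − ε a.s.
    (ε : ℝ) (hε : 0 < ε)
    (hpos : ∀ᵐ ω ∂P, (P[R|mX]) ω ≤ 1 - ε) :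
    ∫ ω, (1 - R ω) * S ω / (1 - (P[R|mX]) ω) ∂P = ∫ ω, S ω ∂P := by
  have hm := hmX ▸ hX.comap_le
  have hR_int : Integrable R P :=
    .of_mem_Icc 0 1 hR.aemeasurable (ae_of_all _ fun ω => by rcases hR01 ω with h | h <;> simp [h])
  have hRS_int : Integrable (fun ω => (1 - R ω) * S ω) P :=
    hSint.bdd_mul (c := 1) (measurable_const.sub hR).aestronglyMeasurable
      (ae_of_all _ fun ω => by rcases hR01 ω with h | h <;> simp [h])
  refine integral_div_eq_integral_of_condExp_eq_mul hm hRS_int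
    (stronglyMeasurable_const.sub stronglyMeasurable_condExp) hε ?_ ?_
  · filter_upwards [hpos] with ω hω
    linarith
  · filter_upwards [hMAR, condExp_one_sub hm hR_int] with ω h_mar h_one_sub
    rw [h_mar, h_one_sub]
    rfl
end

section
/- Assume the MAR condition and the ε-positivity condition, and let π̂ : 𝒳 → ℝ and μ̂ : 𝒳 → ℝ be measurable nuisance estimates with 1 − π̂(X) ≥ ε′ almost surely for some ε′ > 0, such that π̂(X) − π(X) and μ0(X) − μ̂(X) are in L²(P) and all quantities below are integrable. Then the bias of the doubly robust functional obeys the doubly robust bound: | E[ ((1−R)/(1−π̂(X)))·(S − μ̂(X)) + μ̂(X) ] − ψ | ≤ (1/ε′) · ‖π̂(X) − π(X)‖_{L²(P)} · ‖μ̂(X) − μ0(X)‖_{L²(P)}. -/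
/-!
Conditioning on `X`, MAR turns `E[(1 − R)(S − μ̂) | X]` into `(1 − π)(μ0 − μ̂)`, so the conditional
bias of the doubly robust integrand is `(μ0 − μ̂)((1 − π)/(1 − π̂) − 1) = (π̂ − π)(μ0 − μ̂)/(1 − π̂)`,
a product of the two nuisance errors. Bounding `1/(1 − π̂)` by `1/ε′` and applying Cauchy–Schwarz
gives the bound.
-/

open MeasureTheory ProbabilityTheory
open scoped ENNReal

theorem integral_abs_mul_abs_le_eLpNorm_two_mul {α : Type*} {mα : MeasurableSpace α}
    {μ : Measure α} {f g : α → ℝ} (hf : MemLp f 2 μ) (hg : MemLp g 2 μ) :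
    ∫ x, |f x| * |g x| ∂μ ≤ (eLpNorm f 2 μ).toReal * (eLpNorm g 2 μ).toReal := by
  have h2 : (2 : ℝ≥0∞) = ENNReal.ofReal 2 := by norm_num
  have H := integral_mul_norm_le_Lp_mul_Lq .two_two (h2 ▸ hf) (h2 ▸ hg)
  rw [hf.eLpNorm_eq_integral_rpow_norm two_ne_zero ENNReal.ofNat_ne_top,
    hg.eLpNorm_eq_integral_rpow_norm two_ne_zero ENNReal.ofNat_ne_top,
    ENNReal.toReal_ofReal (by positivity), ENNReal.toReal_ofReal (by positivity)]
  simpa [Real.norm_eq_abs, one_div] using H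

section CondExp

variable {Ω : Type*} {m m₀ : MeasurableSpace Ω} {μ : Measure Ω}

theorem abs_integral_le_of_abs_condExp_le (hm : m ≤ m₀) [SigmaFinite (μ.trim hm)]
    {f u v : Ω → ℝ} {C : ℝ} (hf : ∀ᵐ ω ∂μ, |μ[f|m] ω| ≤ C * |u ω| * |v ω|) (hC : 0 ≤ C)
    (hu : MemLp u 2 μ) (hv : MemLp v 2 μ) :
    |∫ ω, f ω ∂μ| ≤ C * (eLpNorm u 2 μ).toReal * (eLpNorm v 2 μ).toReal := by
  have huv : Integrable (fun ω => |u ω| * |v ω|) μ := by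
    have : ENNReal.HolderTriple 2 2 1 := ⟨by simp [ENNReal.inv_two_add_inv_two]⟩
    exact hu.norm.integrable_mul hv.norm
  calc |∫ ω, f ω ∂μ| = |∫ ω, μ[f|m] ω ∂μ| := by rw [integral_condExp hm]
    _ ≤ ∫ ω, |μ[f|m] ω| ∂μ := abs_integral_le_integral_abs
    _ ≤ ∫ ω, C * (|u ω| * |v ω|) ∂μ := by
        refine integral_mono_ae integrable_condExp.abs (huv.const_mul C) ?_
        filter_upwards [hf] with ω hω
        rwa [← mul_assoc]
    _ = C * ∫ ω, |u ω| * |v ω| ∂μ := integral_const_mul C _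
    _ ≤ C * (eLpNorm u 2 μ).toReal * (eLpNorm v 2 μ).toReal := by
        rw [mul_assoc]
        exact mul_le_mul_of_nonneg_left (integral_abs_mul_abs_le_eLpNorm_two_mul hu hv) hC

variable {A S g w R p : Ω → ℝ}

theorem condExp_mul_sub_ae_eq_of_condExp_mul_ae_eq
    (hfac : μ[A * S|m] =ᵐ[μ] μ[A|m] * μ[S|m]) (hg : StronglyMeasurable[m] g)
    (hA : Integrable A μ) (hAS : Integrable (A * S) μ) (hAg : Integrable (A * g) μ) :
    μ[A * (S - g)|m] =ᵐ[μ] μ[A|m] * (μ[S|m] - g) := by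
  rw [mul_sub]
  filter_upwards [condExp_sub hAS hAg m, hfac,
    condExp_mul_of_stronglyMeasurable_right hg hAg hA] with ω hsub hfacω hpull
  simp only [Pi.sub_apply, Pi.mul_apply] at hsub hfacω hpull ⊢
  rw [hsub, hfacω, hpull]
  ring

theorem condExp_weighted_residual_add_sub_ae_eq (hm : m ≤ m₀) [SigmaFinite (μ.trim hm)]
    (hfac : μ[A * S|m] =ᵐ[μ] μ[A|m] * μ[S|m]) (hw : StronglyMeasurable[m] w)
    (hg : StronglyMeasurable[m] g) (hA : Integrable A μ) (hS : Integrable S μ)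
    (hg_int : Integrable g μ) (hAS : Integrable (A * S) μ) (hAg : Integrable (A * g) μ)
    (hwAS : Integrable (w * (A * (S - g))) μ) :
    μ[w * (A * (S - g)) + (g - S)|m] =ᵐ[μ] (w * μ[A|m] - 1) * (μ[S|m] - g) := by
  have hAS_g : Integrable (A * (S - g)) μ := by rw [mul_sub]; exact hAS.sub hAg
  filter_upwards [condExp_add hwAS (hg_int.sub hS) m,
    condExp_mul_of_stronglyMeasurable_left hw hwAS hAS_g,
    condExp_mul_sub_ae_eq_of_condExp_mul_ae_eq hfac hg hA hAS hAg,
    condExp_sub hg_int hS m] with ω hadd hpull hres hsub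
  simp only [Pi.add_apply, Pi.sub_apply, Pi.mul_apply, Pi.one_apply] at hadd hpull hres hsub ⊢
  rw [hadd, hpull, hres, hsub, condExp_of_stronglyMeasurable hm hg hg_int]
  ring

variable [IsFiniteMeasure μ]

theorem integrable_of_mem_Icc_zero_one (hR : AEStronglyMeasurable R μ)
    (hR01 : ∀ ω, R ω ∈ Set.Icc (0 : ℝ) 1) : Integrable R μ :=
  .of_bound hR 1 (ae_of_all _ fun ω => by
    rw [Real.norm_eq_abs, abs_of_nonneg (hR01 ω).1]
    exact (hR01 ω).2)

theorem condExp_one_sub_ae_eq (hm : m ≤ m₀) (hR : Integrable R μ) :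
    μ[fun ω => 1 - R ω|m] =ᵐ[μ] fun ω => 1 - μ[R|m] ω := by
  have h := condExp_sub (m := m) (integrable_const (1 : ℝ)) hR
  rwa [condExp_const hm] at h

/-- Under MAR, the paper's `μ0(X)` coincides with `E[S | X]`. -/
theorem condExp_one_sub_mul_div_ae_eq (hm : m ≤ m₀) (hR : Integrable R μ)
    (hMAR : μ[fun ω => (1 - R ω) * S ω|m] =ᵐ[μ]
      fun ω => μ[fun ω' => 1 - R ω'|m] ω * μ[S|m] ω)
    (hpos : ∀ᵐ ω ∂μ, μ[R|m] ω ≠ 1) :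
    (fun ω => μ[fun ω' => (1 - R ω') * S ω'|m] ω / (1 - μ[R|m] ω)) =ᵐ[μ] μ[S|m] := by
  filter_upwards [hMAR, condExp_one_sub_ae_eq hm hR, hpos] with ω hfac hA hRω
  rw [hfac, hA]
  field_simp [sub_ne_zero.2 hRω.symm]

theorem condExp_doublyRobust_sub_ae_eq (hm : m ≤ m₀)
    (hR : AEStronglyMeasurable R μ) (hR01 : ∀ ω, R ω ∈ Set.Icc (0 : ℝ) 1) (hS : Integrable S μ)
    (hMAR : μ[fun ω => (1 - R ω) * S ω|m] =ᵐ[μ]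
      fun ω => μ[fun ω' => 1 - R ω'|m] ω * μ[S|m] ω)
    (hp : Measurable[m] p) (hg : Measurable[m] g) (hg_int : Integrable g μ)
    (hp_ne : ∀ᵐ ω ∂μ, p ω ≠ 1)
    (hint : Integrable (fun ω => (1 - R ω) / (1 - p ω) * (S ω - g ω) + g ω) μ) :
    μ[fun ω => (1 - R ω) / (1 - p ω) * (S ω - g ω) + g ω - S ω|m] =ᵐ[μ]
      fun ω => (p ω - μ[R|m] ω) * (μ[S|m] ω - g ω) / (1 - p ω) := by
  set A : Ω → ℝ := fun ω => 1 - R ω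
  set w : Ω → ℝ := fun ω => (1 - p ω)⁻¹
  have hA_meas : AEStronglyMeasurable A μ := aestronglyMeasurable_const.sub hR
  have hA_bdd : ∀ᵐ ω ∂μ, ‖A ω‖ ≤ 1 := ae_of_all _ fun ω => by
    obtain ⟨h0, h1⟩ := hR01 ω
    rw [Real.norm_eq_abs, abs_le]
    constructor <;> linarith
  have hRint : Integrable R μ := integrable_of_mem_Icc_zero_one hR hR01
  have hsplit : (fun ω => (1 - R ω) / (1 - p ω) * (S ω - g ω) + g ω - S ω)
      = w * (A * (S - g)) + (g - S) := by
    funext ω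
    simp only [Pi.add_apply, Pi.sub_apply, Pi.mul_apply, A, w]
    ring
  have hwAS : Integrable (w * (A * (S - g))) μ := by
    refine (hint.sub hg_int).congr (ae_of_all _ fun ω => ?_)
    simp only [Pi.sub_apply, Pi.mul_apply, A, w]
    ring
  rw [hsplit]
  filter_upwards [condExp_weighted_residual_add_sub_ae_eq (A := A) (w := w) hm hMAR
      (measurable_const.sub hp).inv.stronglyMeasurable hg.stronglyMeasurable
      ((integrable_const 1).sub hRint) hS hg_int (hS.bdd_mul hA_meas hA_bdd)
      (hg_int.bdd_mul hA_meas hA_bdd) hwAS,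
    condExp_one_sub_ae_eq hm hRint, hp_ne] with ω hres hA hpω
  simp only [Pi.mul_apply, Pi.sub_apply, Pi.one_apply] at hres
  rw [hres, hA]
  have : 1 - p ω ≠ 0 := sub_ne_zero.2 hpω.symm
  simp only [w]
  field_simp
  ring

end CondExp

/-- **The doubly robust (Cauchy–Schwarz) bias bound in Theorem 3.1.** Under MAR and
ε-positivity, for measurable nuisance estimates `π̂, μ̂` with `1 − π̂(X) ≥ ε′ > 0` a.s. and
`π̂(X) − π(X), μ0(X) − μ̂(X) ∈ L²(P)`, the bias of the doubly robust functional satisfies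
`|E[((1−R)/(1−π̂(X)))·(S − μ̂(X)) + μ̂(X)] − ψ|
  ≤ (1/ε′)·‖π̂(X) − π(X)‖_{L²(P)}·‖μ̂(X) − μ0(X)‖_{L²(P)}`. -/
theorem dr_bias_bound
    {Ω 𝒳 : Type*} [MeasurableSpace Ω] [MeasurableSpace 𝒳]
    (P : Measure Ω) [IsProbabilityMeasure P]
    (X : Ω → 𝒳) (hX : Measurable X)
    (R : Ω → ℝ) (hR : Measurable R) (hR01 : ∀ ω, R ω = 0 ∨ R ω = 1)
    (S : Ω → ℝ) (hSmeas : Measurable S) (hSint : Integrable S P)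
    -- the σ-algebra generated by X
    (mX : MeasurableSpace Ω) (hmX : mX = MeasurableSpace.comap X inferInstance)
    -- MAR condition: E[(1−R)·S | mX] = E[1−R | mX] · E[S | mX] a.s.
    (hMAR : P[fun ω => (1 - R ω) * S ω|mX]
      =ᵐ[P] fun ω => (P[fun ω' => 1 - R ω'|mX]) ω * (P[S|mX]) ω)
    -- ε-positivity condition: π(X) = E[R | mX] ≤ 1 − ε a.s.
    (ε : ℝ) (hε : 0 < ε)
    (hpos : ∀ᵐ ω ∂P, (P[R|mX]) ω ≤ 1 - ε)
    -- abbreviations: π(X), μ0(X) and ψ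
    (πX μ0X : Ω → ℝ) (ψ : ℝ)
    (hπX : πX = P[R|mX])
    (hμ0X : μ0X = fun ω => (P[fun ω' => (1 - R ω') * S ω'|mX]) ω / (1 - πX ω))
    (hψ : ψ = ∫ ω, S ω ∂P)
    -- nuisance estimates
    (πhat μhat : 𝒳 → ℝ) (hπhat : Measurable πhat) (hμhat : Measurable μhat)
    (ε' : ℝ) (hε' : 0 < ε')
    (hpos' : ∀ᵐ ω ∂P, ε' ≤ 1 - πhat (X ω))
    -- L² assumptions and integrability of all quantities involved
    (hL2π : MemLp (fun ω => πhat (X ω) - πX ω) 2 P)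
    (hL2μ : MemLp (fun ω => μ0X ω - μhat (X ω)) 2 P)
    (hint1 : Integrable
      (fun ω => (1 - R ω) / (1 - πhat (X ω)) * (S ω - μhat (X ω)) + μhat (X ω)) P) :
    |(∫ ω, ((1 - R ω) / (1 - πhat (X ω)) * (S ω - μhat (X ω)) + μhat (X ω)) ∂P) - ψ|
      ≤ (1 / ε') * (eLpNorm (fun ω => πhat (X ω) - πX ω) 2 P).toReal
          * (eLpNorm (fun ω => μhat (X ω) - μ0X ω) 2 P).toReal := by
  subst hπX hψ
  have hm : mX ≤ _ := hmX.trans_le hX.comap_le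
  have hXm : Measurable[mX] X := hmX ▸ comap_measurable X
  have hR01' : ∀ ω, R ω ∈ Set.Icc (0 : ℝ) 1 := fun ω => by
    rcases hR01 ω with h | h <;> simp [h]
  have hRint : Integrable R P := integrable_of_mem_Icc_zero_one hR.aestronglyMeasurable hR01'
  have hπ_ne : ∀ᵐ ω ∂P, P[R|mX] ω ≠ 1 := hpos.mono fun ω hω => ne_of_lt (by linarith)
  have hμ0 : μ0X =ᵐ[P] P[S|mX] := hμ0X ▸ condExp_one_sub_mul_div_ae_eq hm hRint hMAR hπ_ne
  have hg : Integrable (fun ω => μhat (X ω)) P := ((integrable_condExp.congr hμ0.symm).sub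
    (hL2μ.integrable one_le_two)).congr (ae_of_all _ fun ω => sub_sub_cancel _ _)
  have hbias := condExp_doublyRobust_sub_ae_eq (p := fun ω => πhat (X ω))
    (g := fun ω => μhat (X ω)) hm hR.aestronglyMeasurable hR01' hSint hMAR
    (hπhat.comp hXm) (hμhat.comp hXm) hg (hpos'.mono fun ω hω => ne_of_lt (by linarith)) hint1
  have hbound : ∀ᵐ ω ∂P, |P[fun ω => (1 - R ω) / (1 - πhat (X ω)) * (S ω - μhat (X ω))
      + μhat (X ω) - S ω|mX] ω| ≤ 1 / ε' * |πhat (X ω) - P[R|mX] ω| * |μhat (X ω) - μ0X ω| := by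
    filter_upwards [hbias, hμ0, hpos'] with ω hω hμω hπω
    rw [hω, ← hμω, abs_div, abs_mul, abs_sub_comm (μ0X ω),
      abs_of_pos (show (0 : ℝ) < 1 - πhat (X ω) by linarith)]
    calc _ ≤ |πhat (X ω) - P[R|mX] ω| * |μhat (X ω) - μ0X ω| / ε' :=
          div_le_div_of_nonneg_left (by positivity) hε' hπω
      _ = _ := by ring
  rw [← integral_sub hint1 hSint]
  exact abs_integral_le_of_abs_condExp_le hm hbound (by positivity) hL2π
    (hL2μ.neg.ae_eq (ae_of_all _ fun ω => neg_sub _ _))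
end
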